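/- arXiv:1712.07092 — 2 statements merged into one kernel-verified Lean document; each statement's English description precedes it below -/
import Mathlib

section
/- For real numbers h0, k0, ℓ0, m0 with h0 ≠ 0: if -h0²m0² - 3h0k0ℓ0m0 + h0ℓ0³ - 2k0³m0 + (3/4)k0²ℓ0² > 0, then h0ℓ0 + k0² > 0. -/
/-- Positivity of the horizon area function implies α0 = h0ℓ0 + k0² > 0. -/
theorem stmt1 (h0 k0 l0 m0 : ℝ) (hh0 : h0 ≠ 0)
    (hpos : -h0 ^ 2 * m0 ^ 2 - 3 * h0 * k0 * l0 * m0 + h0 * l0 ^ 3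
      - 2 * k0 ^ 3 * m0 + (3 / 4) * k0 ^ 2 * l0 ^ 2 > 0) :
    h0 * l0 + k0 ^ 2 > 0 := by
  have hsq : (0:ℝ) < h0 ^ 2 := by positivity
  have key : (h0 * l0 + k0 ^ 2) ^ 3 =
      h0 ^ 2 * (-h0 ^ 2 * m0 ^ 2 - 3 * h0 * k0 * l0 * m0 + h0 * l0 ^ 3
        - 2 * k0 ^ 3 * m0 + (3 / 4) * k0 ^ 2 * l0 ^ 2)
      + (h0 ^ 2 * m0 + (3 / 2) * h0 * k0 * l0 + k0 ^ 3) ^ 2 := by ring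
  have hcube : (0:ℝ) < (h0 * l0 + k0 ^ 2) ^ 3 := by
    rw [key]
    have := mul_pos hsq hpos
    nlinarith [sq_nonneg (h0 ^ 2 * m0 + (3 / 2) * h0 * k0 * l0 + k0 ^ 3)]
  nlinarith [hcube, sq_nonneg (h0 * l0 + k0 ^ 2)]
end

section
/- Let n ≥ 1, z_1 < ... < z_n, and define ω̂(ρ,z) = -Σ_i (m h_i + (3/2)k_i)(z - z_i)/r_i - Σ_i Σ_{j≠i} ((h_i m_j + (3/2)k_i ℓ_j)/(z_i - z_j))·((ρ² + (z-z_i)(z-z_j))/(r_i r_j) - 1), where r_i = √(ρ² + (z-z_i)²). Then on each axis interval I_i = {ρ = 0, z_i < z < z_{i+1}}, ω̂ is constant, and the difference of its values on the two intervals adjacent to z_i equals -2·(h_i m + (3/2)k_i + Σ_{j≠i}(h_i m_j - m_i h_j - (3/2)(ℓ_i k_j - k_i ℓ_j))/|z_i - z_j|). -/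
open Finset in
/-- The φ-component of the 1-form ω̂ of the multi-centred Gibbons–Hawking
solution, equation (5.3) of the paper. -/
noncomputable def omegaHat (n : ℕ) (z h k l m' : Fin n → ℝ) (m0 : ℝ)
    (ρ ζ : ℝ) : ℝ :=
  -(∑ i, (m0 * h i + (3 / 2) * k i) * (ζ - z i)
      / Real.sqrt (ρ ^ 2 + (ζ - z i) ^ 2))
  - ∑ i, ∑ j ∈ Finset.univ.erase i,
      ((h i * m' j + (3 / 2) * k i * l j) / (z i - z j)) *
        ((ρ ^ 2 + (ζ - z i) * (ζ - z j))
          / (Real.sqrt (ρ ^ 2 + (ζ - z i) ^ 2) * Real.sqrt (ρ ^ 2 + (ζ - z j) ^ 2))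
          - 1)

lemma div_abs_eq (x : ℝ) (hx : x ≠ 0) : x / |x| = if 0 < x then 1 else -1 := by
  rcases hx.lt_or_gt with hneg | hpos
  · rw [abs_of_neg hneg, if_neg (not_lt.2 hneg.le)]
    field_simp
  · rw [abs_of_pos hpos, if_pos hpos, div_self hpos.ne']

open Finset in
lemma axis_val (n : ℕ) (z h k l m' : Fin n → ℝ) (m0 ζ : ℝ) (hζ : ∀ j, ζ ≠ z j) :
    omegaHat n z h k l m' m0 0 ζ =
    -(∑ i, (m0 * h i + (3 / 2) * k i) * (if z i < ζ then (1:ℝ) else -1))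
    - ∑ i, ∑ j ∈ Finset.univ.erase i,
        ((h i * m' j + (3 / 2) * k i * l j) / (z i - z j)) *
          ((if z i < ζ then (1:ℝ) else -1) * (if z j < ζ then (1:ℝ) else -1) - 1) := by
  have hne : ∀ j, ζ - z j ≠ 0 := fun j => sub_ne_zero.2 (hζ j)
  have hsqrt : ∀ j, Real.sqrt ((0:ℝ) ^ 2 + (ζ - z j) ^ 2) = |ζ - z j| := by
    intro j
    rw [show (0:ℝ) ^ 2 + (ζ - z j) ^ 2 = (ζ - z j) ^ 2 by ring, Real.sqrt_sq_eq_abs]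
  have hsgn : ∀ j, (ζ - z j) / |ζ - z j| = if z j < ζ then (1:ℝ) else -1 := by
    intro j
    rw [div_abs_eq _ (hne j)]
    simp [sub_pos]
  unfold omegaHat
  congr 1
  · congr 1
    apply Finset.sum_congr rfl
    intro i _
    rw [hsqrt, mul_div_assoc, hsgn]
  · apply Finset.sum_congr rfl
    intro i _
    apply Finset.sum_congr rfl
    intro j _
    rw [hsqrt, hsqrt]
    congr 1
    rw [show (0:ℝ) ^ 2 + (ζ - z i) * (ζ - z j) = (ζ - z i) * (ζ - z j) by ring,
        ← div_mul_div_comm, hsgn, hsgn]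

open Finset in
lemma jump (n : ℕ) (i : Fin n) (a : Fin n → ℝ) (c : Fin n → Fin n → ℝ)
    (S S' : Fin n → ℝ) (hS'i : S' i = 1) (hSi : S i = -1)
    (hSS : ∀ j, j ≠ i → S' j = S j) :
    (-(∑ j, a j * S' j) - ∑ p, ∑ q ∈ Finset.univ.erase p, c p q * (S' p * S' q - 1))
      - (-(∑ j, a j * S j) - ∑ p, ∑ q ∈ Finset.univ.erase p, c p q * (S p * S q - 1))
    = -2 * a i - 2 * ∑ j ∈ Finset.univ.erase i, (c i j + c j i) * S j := by
  have h1 : (∑ j, a j * S' j) - (∑ j, a j * S j) = 2 * a i := by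
    rw [← Finset.sum_sub_distrib, Finset.sum_eq_single i]
    · rw [hS'i, hSi]; ring
    · intro j _ hj; rw [hSS j hj]; ring
    · intro hmem; exact absurd (Finset.mem_univ i) hmem
  have h2 : (∑ p, ∑ q ∈ Finset.univ.erase p, c p q * (S' p * S' q - 1))
      - (∑ p, ∑ q ∈ Finset.univ.erase p, c p q * (S p * S q - 1))
      = 2 * ∑ j ∈ Finset.univ.erase i, (c i j + c j i) * S j := by
    rw [← Finset.sum_sub_distrib,
      ← Finset.add_sum_erase Finset.univ
        (fun p => (∑ q ∈ Finset.univ.erase p, c p q * (S' p * S' q - 1))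
          - ∑ q ∈ Finset.univ.erase p, c p q * (S p * S q - 1)) (Finset.mem_univ i)]
    have hi : (∑ q ∈ Finset.univ.erase i, c i q * (S' i * S' q - 1))
        - ∑ q ∈ Finset.univ.erase i, c i q * (S i * S q - 1)
        = ∑ q ∈ Finset.univ.erase i, 2 * c i q * S q := by
      rw [← Finset.sum_sub_distrib]
      apply Finset.sum_congr rfl
      intro q hq
      have hqi : q ≠ i := Finset.ne_of_mem_erase hq
      rw [hS'i, hSi, hSS q hqi]; ring
    have hrest : ∀ p ∈ Finset.univ.erase i,
        ((∑ q ∈ Finset.univ.erase p, c p q * (S' p * S' q - 1))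
          - ∑ q ∈ Finset.univ.erase p, c p q * (S p * S q - 1))
        = 2 * c p i * S p := by
      intro p hp
      have hpi : p ≠ i := Finset.ne_of_mem_erase hp
      rw [← Finset.sum_sub_distrib,
        Finset.sum_eq_single_of_mem i (Finset.mem_erase.2 ⟨hpi.symm, Finset.mem_univ i⟩)]
      · rw [hS'i, hSi, hSS p hpi]; ring
      · intro q hq hqi
        rw [hSS p hpi, hSS q hqi]; ring
    rw [hi, Finset.sum_congr rfl hrest, ← Finset.sum_add_distrib, Finset.mul_sum]
    apply Finset.sum_congr rfl
    intro q hq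
    ring
  linarith [h1, h2]

open Finset in
/-- On the axis ρ = 0, ω̂ is constant on each interval between consecutive
centres, and its jump across the centre z_i equals -2 times the i-th bubble
equation expression. -/
theorem stmt18 (n : ℕ) (hn : 1 ≤ n) (z h k l m' : Fin n → ℝ) (m0 : ℝ)
    (hz : StrictMono z) :
    (∀ ζ ζ' : ℝ, (∀ j, ζ ≠ z j) → (∀ j, ζ' ≠ z j) →
      (∀ j, z j < ζ ↔ z j < ζ') →
      omegaHat n z h k l m' m0 0 ζ = omegaHat n z h k l m' m0 0 ζ') ∧
    (∀ i : Fin n, ∀ ζ ζ' : ℝ, (∀ j, ζ ≠ z j) → (∀ j, ζ' ≠ z j) →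
      ζ < z i → z i < ζ' → (∀ j, j ≠ i → (z j < ζ ↔ z j < ζ')) →
      omegaHat n z h k l m' m0 0 ζ' - omegaHat n z h k l m' m0 0 ζ
        = -2 * (h i * m0 + (3 / 2) * k i +
            ∑ j ∈ Finset.univ.erase i,
              (h i * m' j - m' i * h j - (3 / 2) * (l i * k j - k i * l j))
                / |z i - z j|)) := by
  constructor
  · intro ζ ζ' hζ hζ' hiff
    rw [axis_val n z h k l m' m0 ζ hζ, axis_val n z h k l m' m0 ζ' hζ']
    have hfix : ∀ j, (if z j < ζ' then (1:ℝ) else -1) = (if z j < ζ then (1:ℝ) else -1) :=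
      fun j => if_congr (hiff j).symm rfl rfl
    simp only [hfix]
  · intro i ζ ζ' hζ hζ' hlt hlt' hiff
    -- signs at ζ and ζ'
    have hS'i : (if z i < ζ' then (1:ℝ) else -1) = 1 := if_pos hlt'
    have hSi : (if z i < ζ then (1:ℝ) else -1) = -1 := if_neg (not_lt.2 hlt.le)
    have hjlt : ∀ j, z j < z i → z j < ζ := by
      intro j hji
      have hne : j ≠ i := fun e => lt_irrefl _ (e ▸ hji)
      exact (hiff j hne).2 (hji.trans hlt')
    have hSS : ∀ j, j ≠ i →
        (if z j < ζ' then (1:ℝ) else -1) = (if z j < ζ then (1:ℝ) else -1) :=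
      fun j hj => if_congr (hiff j hj).symm rfl rfl
    have key := jump n i (fun j => m0 * h j + (3 / 2) * k j)
      (fun p q => (h p * m' q + (3 / 2) * k p * l q) / (z p - z q))
      (fun j => if z j < ζ then (1:ℝ) else -1)
      (fun j => if z j < ζ' then (1:ℝ) else -1) hS'i hSi hSS
    rw [axis_val n z h k l m' m0 ζ' hζ', axis_val n z h k l m' m0 ζ hζ, key]
    have hsum : ∑ j ∈ Finset.univ.erase i,
        ((h i * m' j + (3 / 2) * k i * l j) / (z i - z j)
          + (h j * m' i + (3 / 2) * k j * l i) / (z j - z i))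
          * (if z j < ζ then (1:ℝ) else -1)
        = ∑ j ∈ Finset.univ.erase i,
            (h i * m' j - m' i * h j - (3 / 2) * (l i * k j - k i * l j)) / |z i - z j| := by
      apply Finset.sum_congr rfl
      intro j hj
      have hji : j ≠ i := Finset.ne_of_mem_erase hj
      have hzne : z j ≠ z i := fun e => hji (hz.injective e)
      rcases hzne.lt_or_gt with hlt2 | hlt2
      · -- z j < z i
        have h1 : z i - z j ≠ 0 := sub_ne_zero.2 hlt2.ne'
        have h2 : z j - z i ≠ 0 := sub_ne_zero.2 hlt2.ne
        rw [if_pos (hjlt j hlt2), abs_of_pos (sub_pos.2 hlt2)]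
        field_simp
        ring
      · -- z i < z j
        have hnot : ¬ z j < ζ := not_lt.2 ((hlt.trans hlt2).le)
        have h1 : z i - z j ≠ 0 := sub_ne_zero.2 hlt2.ne
        have h2 : z j - z i ≠ 0 := sub_ne_zero.2 hlt2.ne'
        rw [if_neg hnot, abs_of_neg (sub_neg.2 hlt2)]
        field_simp
        ring
    rw [hsum]
    ring
end
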